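/- arXiv:2305.02611 — 3 statements merged into one kernel-verified Lean document; each statement's English description precedes it below -/
import Mathlib

section
/- Let n ≥ 0 and s ≥ 1. The quotient ring ℤ₂[c, d]/(c^{n+1}, d² + c^s) of the polynomial ring in two variables c, d over ℤ₂ has dimension 2n + 2 as a vector space over ℤ₂. -/
/-!
Adjoining the two roots one at a time identifies `R[c, d]/(f(c), g(c, d))` with the tower
`(R[c]/(f))[d]/(g)`. When `f` and `g` are monic, each step is free with a power basis, so the
rank is `deg f · deg_d g`; for `f = c^{n+1}` and `g = d² + c^s` this is `(n + 1) · 2`.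
-/

open Polynomial

theorem Polynomial.aevalAeval_eq_eval₂ {R A : Type*} [CommSemiring R] [CommSemiring A]
    [Algebra R A] (x y : A) (p : R[X][X]) :
    aevalAeval x y p = p.eval₂ (aeval x).toRingHom y := by
  have : aevalAeval x y = eval₂AlgHom (aeval (R := R) x) y (fun _ => Commute.all _ _) :=
    algHom_ext' (algHom_ext (by simp)) (by simp)
  rw [this]
  rfl

theorem Polynomial.aevalAeval_algHom_apply {R A B : Type*} [CommSemiring R] [CommSemiring A]
    [CommSemiring B] [Algebra R A] [Algebra R B] (φ : A →ₐ[R] B) (x y : A) (p : R[X][X]) :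
    φ (aevalAeval x y p) = aevalAeval (φ x) (φ y) p := by
  have : φ.comp (aevalAeval x y) = aevalAeval (R := R) (φ x) (φ y) :=
    algHom_ext' (algHom_ext (by simp)) (by simp)
  exact AlgHom.congr_fun this p

namespace AdjoinRoot

variable {R A : Type*} [CommRing R] [CommRing A] [Algebra R A] (f : R[X]) (g : R[X][X])

theorem eval₂_map_mk (ψ : AdjoinRoot f →ₐ[R] A) (y : A) :
    (g.map (mk f)).eval₂ ψ y = aevalAeval (ψ (root f)) y g := by
  have : (ψ : AdjoinRoot f →+* A).comp (mk f) = (aeval (ψ (root f))).toRingHom := by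
    ext <;> simp [← algebraMap_eq]
  rw [aevalAeval_eq_eval₂, eval₂_map, this]

/-- The ideal `(f(c), g(c, d))` of `R[c, d]`, with `c = X 0`, `d = X 1`, and `g` read as a
polynomial in `d` with coefficients in `R[c]`. -/
noncomputable def bivariateIdeal : Ideal (MvPolynomial (Fin 2) R) :=
  Ideal.span {aeval (MvPolynomial.X 0) f, aevalAeval (MvPolynomial.X 0) (MvPolynomial.X 1) g}

theorem bivariateIdeal_le_ker_iff (φ : MvPolynomial (Fin 2) R →ₐ[R] A) :
    bivariateIdeal f g ≤ RingHom.ker φ ↔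
      aeval (φ (MvPolynomial.X 0)) f = 0 ∧
        aevalAeval (φ (MvPolynomial.X 0)) (φ (MvPolynomial.X 1)) g = 0 := by
  rw [bivariateIdeal, Ideal.span_le, Set.insert_subset_iff, Set.singleton_subset_iff,
    SetLike.mem_coe, SetLike.mem_coe, RingHom.mem_ker, RingHom.mem_ker, aeval_algHom_apply,
    aevalAeval_algHom_apply]

theorem aeval_of_root : aeval (of (g.map (mk f)) (root f)) f = 0 := by
  rw [← algebraMap_eq, aeval_algebraMap_apply, aeval_eq, mk_self, map_zero]

theorem aevalAeval_of_root_root :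
    aevalAeval (of (g.map (mk f)) (root f)) (root (g.map (mk f))) g = 0 :=
  (eval₂_map_mk f g (ofAlgHom R _) _).symm.trans (eval₂_root _)

noncomputable def fromQuotientBivariateIdeal :
    MvPolynomial (Fin 2) R ⧸ bivariateIdeal f g →ₐ[R] AdjoinRoot (g.map (mk f)) :=
  Ideal.Quotient.liftₐ _ (MvPolynomial.aeval ![of _ (root f), root _]) fun _ ha =>
    RingHom.mem_ker.mp <| (bivariateIdeal_le_ker_iff f g _).mpr (by
      simp only [MvPolynomial.aeval_X, Matrix.cons_val_zero, Matrix.cons_val_one]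
      exact ⟨aeval_of_root f g, aevalAeval_of_root_root f g⟩) ha

theorem fromQuotientBivariateIdeal_mk (p : MvPolynomial (Fin 2) R) :
    fromQuotientBivariateIdeal f g (Ideal.Quotient.mk _ p) =
      MvPolynomial.aeval ![of _ (root f), root _] p :=
  rfl

noncomputable def toQuotientBivariateIdeal :
    AdjoinRoot (g.map (mk f)) →ₐ[R] MvPolynomial (Fin 2) R ⧸ bivariateIdeal f g :=
  let q := Ideal.Quotient.mkₐ R (bivariateIdeal f g)
  have hq := (bivariateIdeal_le_ker_iff f g q).mp (Ideal.Quotient.mkₐ_ker R _).ge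
  liftAlgHom _ (liftAlgHom f (Algebra.ofId _ _) (q (MvPolynomial.X 0))
    (by rw [Algebra.toRingHom_ofId, ← aeval_def]; exact hq.1))
    (q (MvPolynomial.X 1)) (by rw [eval₂_map_mk, liftAlgHom_root]; exact hq.2)

noncomputable def quotientBivariateIdealEquiv :
    (MvPolynomial (Fin 2) R ⧸ bivariateIdeal f g) ≃ₐ[R] AdjoinRoot (g.map (mk f)) :=
  AlgEquiv.ofAlgHom (fromQuotientBivariateIdeal f g) (toQuotientBivariateIdeal f g)
    (algHom_ext' (algHom_ext (by simp [fromQuotientBivariateIdeal_mk, toQuotientBivariateIdeal]))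
      (by simp [fromQuotientBivariateIdeal_mk, toQuotientBivariateIdeal]))
    (Ideal.Quotient.algHom_ext R (MvPolynomial.algHom_ext fun i => by
      fin_cases i <;> simp [fromQuotientBivariateIdeal_mk, toQuotientBivariateIdeal]))

variable {f g}

theorem finrank_map_mk [Nontrivial R] (hf : f.Monic) (hg : g.Monic) :
    Module.finrank R (AdjoinRoot (g.map (mk f))) = f.natDegree * g.natDegree := by
  have hfin : Module.finrank R (AdjoinRoot f) = f.natDegree := (powerBasis' hf).finrank
  rcases Nat.eq_zero_or_pos f.natDegree with hdeg | hdeg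
  · have : Subsingleton (AdjoinRoot f) := by
      rw [hf.natDegree_eq_zero] at hdeg
      subst hdeg
      exact subsingleton_of_zero_eq_one (by rw [← map_one (mk 1), mk_self])
    have := Module.subsingleton (AdjoinRoot f) (AdjoinRoot (g.map (mk f)))
    rw [hdeg, zero_mul]
    exact Module.finrank_zero_of_subsingleton
  · have : Nontrivial (AdjoinRoot f) := Module.nontrivial_of_finrank_pos (R := R) (hfin ▸ hdeg)
    have := hf.free_adjoinRoot
    have := (hg.map (mk f)).free_adjoinRoot
    rw [← Module.finrank_mul_finrank R (AdjoinRoot f), hfin, (powerBasis' (hg.map _)).finrank,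
      powerBasis'_dim, hg.natDegree_map]

end AdjoinRoot

open MvPolynomial

theorem finrank_quotient_twisted_ring_general (n s : ℕ) :
    Module.finrank (ZMod 2)
      (MvPolynomial (Fin 2) (ZMod 2) ⧸
        Ideal.span {(X 0 : MvPolynomial (Fin 2) (ZMod 2)) ^ (n + 1), (X 1) ^ 2 + (X 0) ^ s}) =
      2 * n + 2 := by
  have hI : Ideal.span {(X 0 : MvPolynomial (Fin 2) (ZMod 2)) ^ (n + 1), (X 1) ^ 2 + (X 0) ^ s} =
      AdjoinRoot.bivariateIdeal (Polynomial.X ^ (n + 1))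
        (Polynomial.X ^ 2 + Polynomial.C (Polynomial.X ^ s)) := by
    simp [AdjoinRoot.bivariateIdeal]
  rw [hI, (AdjoinRoot.quotientBivariateIdealEquiv _ _).toLinearEquiv.finrank_eq,
    AdjoinRoot.finrank_map_mk (monic_X_pow _) (monic_X_pow_add_C _ two_ne_zero),
    natDegree_X_pow, natDegree_X_pow_add_C]
  ring

/-- For `n ≥ 0` and `s ≥ 1`, the ring `ℤ₂[c, d]/(c^{n+1}, d² + c^s)` has
dimension `2n + 2` as a `ℤ₂`-vector space. -/
theorem finrank_quotient_twisted_ring (n s : ℕ) (hs : 1 ≤ s) :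
    Module.finrank (ZMod 2)
      (MvPolynomial (Fin 2) (ZMod 2) ⧸
        Ideal.span {(X 0 : MvPolynomial (Fin 2) (ZMod 2)) ^ (n + 1), (X 1) ^ 2 + (X 0) ^ s}) =
      2 * n + 2 :=
  finrank_quotient_twisted_ring_general n s
end

section
/- Let n ≥ 0. There is an isomorphism of ℤ₂-algebras ℤ₂[c, d]/(c^{n+1}, d² + c·d) ≅ ℤ₂[x, y]/(x^{n+2}, y^{n+2}, x^{n+1} + y^{n+1}, x·y), induced by x ↦ d and y ↦ d + c. -/
/-!
Over `ℤ₂` the substitution `x ↦ d, y ↦ d + c` is invertible, with inverse `c ↦ x + y, d ↦ x`, so it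
suffices to check that each substitution respects the relations. Both `d` and `d + c` are roots of
`u² = c u`, hence `u^{k+1} = c^k u`; this gives `d^{n+2} = (d + c)^{n+2} = 0` and
`d^{n+1} + (d + c)^{n+1} = 2 c^n d + c^{n+1} = 0`. Conversely `x y = 0` makes the binomial
expansion of `(x + y)^{n+1}` collapse to `x^{n+1} + y^{n+1} = 0`.
-/

open MvPolynomial

theorem pow_succ_eq_pow_mul_of_sq_eq_mul {M : Type*} [CommMonoid M] {a u : M}
    (h : u ^ 2 = a * u) (k : ℕ) : u ^ (k + 1) = a ^ k * u := by
  induction k with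
  | zero => simp
  | succ k ih => rw [pow_succ, ih, mul_assoc, ← sq, h, ← mul_assoc, ← pow_succ]

theorem add_pow_succ_of_mul_eq_zero {R : Type*} [CommRing R] {x y : R} (h : x * y = 0)
    (k : ℕ) : (x + y) ^ (k + 1) = x ^ (k + 1) + y ^ (k + 1) := by
  induction k with
  | zero => simp
  | succ k ih => rw [pow_succ, ih]; linear_combination (x ^ k + y ^ k) * h

namespace MvPolynomial

variable {σ τ R : Type*} [CommRing R] {s : Set (MvPolynomial σ R)} {t : Set (MvPolynomial τ R)}

theorem aeval_mk_X_eq_zero_of_mem {p : MvPolynomial σ R} (hp : p ∈ s) :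
    aeval (fun i ↦ Ideal.Quotient.mk (Ideal.span s) (X i)) p = 0 := by
  have h : aeval (fun i ↦ Ideal.Quotient.mk (Ideal.span s) (X i)) =
      Ideal.Quotient.mkₐ R (Ideal.span s) :=
    algHom_ext fun i ↦ by simp
  rw [h, Ideal.Quotient.mkₐ_eq_mk, Ideal.Quotient.eq_zero_iff_mem]
  exact Ideal.subset_span hp

noncomputable def liftQuotientSpan {A : Type*} [CommRing A] [Algebra R A] (v : σ → A)
    (hv : ∀ p ∈ s, aeval v p = 0) : MvPolynomial σ R ⧸ Ideal.span s →ₐ[R] A :=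
  Ideal.Quotient.liftₐ _ (aeval v) fun _ hp ↦
    (Ideal.span_le (I := RingHom.ker (aeval v))).mpr hv hp

@[simp]
theorem liftQuotientSpan_mk {A : Type*} [CommRing A] [Algebra R A] (v : σ → A)
    (hv : ∀ p ∈ s, aeval v p = 0) (p : MvPolynomial σ R) :
    liftQuotientSpan v hv (Ideal.Quotient.mk _ p) = aeval v p :=
  rfl

noncomputable def quotientSpanAlgEquiv (v : σ → MvPolynomial τ R ⧸ Ideal.span t)
    (w : τ → MvPolynomial σ R ⧸ Ideal.span s)
    (hv : ∀ p ∈ s, aeval v p = 0) (hw : ∀ q ∈ t, aeval w q = 0)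
    (hvw : ∀ j, liftQuotientSpan v hv (w j) = Ideal.Quotient.mk _ (X j))
    (hwv : ∀ i, liftQuotientSpan w hw (v i) = Ideal.Quotient.mk _ (X i)) :
    (MvPolynomial σ R ⧸ Ideal.span s) ≃ₐ[R] (MvPolynomial τ R ⧸ Ideal.span t) :=
  AlgEquiv.ofAlgHom (liftQuotientSpan v hv) (liftQuotientSpan w hw)
    (Ideal.Quotient.algHom_ext R <| algHom_ext fun j ↦ by simpa using hvw j)
    (Ideal.Quotient.algHom_ext R <| algHom_ext fun i ↦ by simpa using hwv i)

@[simp]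
theorem quotientSpanAlgEquiv_mk (v : σ → MvPolynomial τ R ⧸ Ideal.span t)
    (w : τ → MvPolynomial σ R ⧸ Ideal.span s) (hv hw hvw hwv) (p : MvPolynomial σ R) :
    quotientSpanAlgEquiv v w hv hw hvw hwv (Ideal.Quotient.mk _ p) = aeval v p :=
  rfl

end MvPolynomial

namespace ZModTwoAlgebra

variable {A : Type*} [CommRing A] [Algebra (ZMod 2) A]

theorem two_eq_zero : (2 : A) = 0 := by
  rw [← map_ofNat (algebraMap (ZMod 2) A) 2, show (OfNat.ofNat 2 : ZMod 2) = 0 from rfl, map_zero]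

theorem add_cancel_left (a b : A) : a + (a + b) = b := by
  linear_combination a * (two_eq_zero : (2 : A) = 0)

theorem connectedSum_relations_of_sq_add_mul_eq_zero {n : ℕ} {c d : A} (hc : c ^ (n + 1) = 0)
    (hd : d ^ 2 + c * d = 0) :
    d ^ (n + 2) = 0 ∧ (d + c) ^ (n + 2) = 0 ∧ d ^ (n + 1) + (d + c) ^ (n + 1) = 0 ∧
      d * (d + c) = 0 := by
  have h2 : (2 : A) = 0 := two_eq_zero
  have hd_sq : d ^ 2 = c * d := by linear_combination hd - c * d * h2
  have hdc_sq : (d + c) ^ 2 = c * (d + c) := by linear_combination hd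
  refine ⟨?_, ?_, ?_, by linear_combination hd⟩
  · rw [pow_succ_eq_pow_mul_of_sq_eq_mul hd_sq, hc, zero_mul]
  · rw [pow_succ_eq_pow_mul_of_sq_eq_mul hdc_sq, hc, zero_mul]
  · rw [pow_succ_eq_pow_mul_of_sq_eq_mul hd_sq, pow_succ_eq_pow_mul_of_sq_eq_mul hdc_sq]
    linear_combination hc + c ^ n * d * h2

theorem add_pow_succ_eq_zero_and_sq_add_mul_eq_zero {n : ℕ} {x y : A}
    (hs : x ^ (n + 1) + y ^ (n + 1) = 0) (hxy : x * y = 0) :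
    (x + y) ^ (n + 1) = 0 ∧ x ^ 2 + (x + y) * x = 0 :=
  ⟨add_pow_succ_of_mul_eq_zero hxy n ▸ hs,
    by linear_combination hxy + x ^ 2 * (two_eq_zero : (2 : A) = 0)⟩

end ZModTwoAlgebra

open ZModTwoAlgebra in
/-- For `n ≥ 0`, there is a `ℤ₂`-algebra isomorphism
`ℤ₂[c, d]/(c^{n+1}, d² + c·d) ≅ ℤ₂[x, y]/(x^{n+2}, y^{n+2}, x^{n+1} + y^{n+1}, x·y)`
induced by `x ↦ d` and `y ↦ d + c`. -/
theorem algEquiv_to_connected_sum_ring (n : ℕ) :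
    ∃ e : (MvPolynomial (Fin 2) (ZMod 2) ⧸
            Ideal.span {(X 0 : MvPolynomial (Fin 2) (ZMod 2)) ^ (n + 2), (X 1) ^ (n + 2),
              (X 0) ^ (n + 1) + (X 1) ^ (n + 1), (X 0) * (X 1)})
          ≃ₐ[ZMod 2]
          (MvPolynomial (Fin 2) (ZMod 2) ⧸
            Ideal.span {(X 0 : MvPolynomial (Fin 2) (ZMod 2)) ^ (n + 1),
              (X 1) ^ 2 + (X 0) * (X 1)}),
      e (Ideal.Quotient.mk _ (X 0)) = Ideal.Quotient.mk _ (X 1) ∧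
      e (Ideal.Quotient.mk _ (X 1)) = Ideal.Quotient.mk _ (X 1 + X 0) := by
  have hJ := fun p (hp : p ∈ ({(X 0 : MvPolynomial (Fin 2) (ZMod 2)) ^ (n + 1),
      (X 1) ^ 2 + (X 0) * (X 1)} : Set _)) ↦ aeval_mk_X_eq_zero_of_mem hp
  have hI := fun p (hp : p ∈ ({(X 0 : MvPolynomial (Fin 2) (ZMod 2)) ^ (n + 2), (X 1) ^ (n + 2),
      (X 0) ^ (n + 1) + (X 1) ^ (n + 1), (X 0) * (X 1)} : Set _)) ↦ aeval_mk_X_eq_zero_of_mem hp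
  simp only [Set.forall_mem_insert, Set.mem_singleton_iff, forall_eq, map_pow, map_add, map_mul,
    aeval_X] at hI hJ
  refine ⟨quotientSpanAlgEquiv
    ![Ideal.Quotient.mk _ (X 1), Ideal.Quotient.mk _ (X 1) + Ideal.Quotient.mk _ (X 0)]
    ![Ideal.Quotient.mk _ (X 0) + Ideal.Quotient.mk _ (X 1), Ideal.Quotient.mk _ (X 0)]
    ?_ ?_ ?_ ?_, ?_, ?_⟩
  · simpa [Set.forall_mem_insert] using connectedSum_relations_of_sq_add_mul_eq_zero hJ.1 hJ.2
  · simpa [Set.forall_mem_insert] using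
      add_pow_succ_eq_zero_and_sq_add_mul_eq_zero hI.2.2.1 hI.2.2.2
  · intro j; fin_cases j <;> simp [add_cancel_left]
  · intro i; fin_cases i <;> simp [add_cancel_left]
  · simp
  · simp
end

section
/- Let q ≥ 1, j ≥ 1 and r be integers with r > q·j. The quotient ring ℤ₂[c, d]/(c^{r+1}, c^{qj} + d^j, c^{r−qj+1}·d) of the polynomial ring in two variables c, d over ℤ₂ has dimension j·(r − q·j) + q·j + j as a vector space over ℤ₂. -/
/-!
Modulo `I`, a monomial `c^a d^b` can be rewritten with `d^j = c^{qj}` (note `-1 = 1` in `ℤ₂`) until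
`b < j`, and then vanishes unless it is standard: `c^a` with `a ≤ r`, or `c^a d^b` with
`a ≤ r - qj` and `0 < b < j`. Extended linearly, this rewriting is a `ℤ₂`-linear map `N` on
`ℤ₂[c, d]` with `f - N f ∈ I` and `N (I) = 0`, so `ℤ₂[c, d]/I ≅ range N`, which has the
`(r + 1) + (r - qj + 1)(j - 1)` standard monomials as a basis.
-/

open MvPolynomial Finset Module

theorem Ideal.finrank_quotient_eq_finrank_range {K A M : Type*} [CommRing K] [CommRing A]
    [Algebra K A] [AddCommGroup M] [Module K M] (I : Ideal A) (N : A →ₗ[K] M)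
    (hN : LinearMap.ker N = I.restrictScalars K) :
    finrank K (A ⧸ I) = finrank K (LinearMap.range N) :=
  ((Submodule.Quotient.restrictScalarsEquiv K I).symm ≪≫ₗ
    Submodule.quotEquivOfEq _ _ hN.symm ≪≫ₗ N.quotKerEquivRange).finrank_eq

namespace MixedRing

variable (q j r : ℕ)

-- the exponent of `c^a d^b` after rewriting `d^j ↦ c^{qj}` as often as possible
def reduceExp (e : ℕ × ℕ) : ℕ × ℕ := (e.1 + q * j * (e.2 / j), e.2 % j)

def standardExps : Finset (ℕ × ℕ) :=
  range (r + 1) ×ˢ {0} ∪ range (r - q * j + 1) ×ˢ Ico 1 j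

variable {q j r}

lemma mem_standardExps {e : ℕ × ℕ} :
    e ∈ standardExps q j r ↔ e.1 ≤ r ∧ e.2 = 0 ∨ e.1 ≤ r - q * j ∧ 0 < e.2 ∧ e.2 < j := by
  simp only [standardExps, mem_union, mem_product, mem_range, mem_singleton, mem_Ico,
    Nat.lt_succ_iff, Nat.one_le_iff_ne_zero, Nat.pos_iff_ne_zero]

lemma card_standardExps (hj : 0 < j) (hr : q * j ≤ r) :
    #(standardExps q j r) = j * (r - q * j) + q * j + j := by
  have hdisj : Disjoint (range (r + 1) ×ˢ {0}) (range (r - q * j + 1) ×ˢ Ico 1 j) := by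
    simp only [disjoint_left, mem_product, mem_singleton, mem_Ico]
    omega
  rw [standardExps, card_union_of_disjoint hdisj, card_product, card_product, card_range,
    card_range, card_singleton, Nat.card_Ico]
  obtain ⟨k, rfl⟩ := Nat.exists_eq_add_of_le hr
  obtain ⟨i, rfl⟩ := Nat.exists_eq_add_of_lt hj
  simp only [Nat.add_sub_cancel_left, Nat.add_sub_cancel]
  ring

lemma reduceExp_of_mem (hj : 0 < j) {e : ℕ × ℕ} (he : e ∈ standardExps q j r) :
    reduceExp q j e = e := by
  have hlt : e.2 < j := by rw [mem_standardExps] at he; omega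
  simp [reduceExp, Nat.div_eq_of_lt hlt, Nat.mod_eq_of_lt hlt]

lemma reduceExp_add_mul_zero (hj : 0 < j) (e : ℕ × ℕ) :
    reduceExp q j (e + (q * j, 0)) = reduceExp q j (e + (0, j)) := by
  simp only [reduceExp, Prod.fst_add, Prod.snd_add, add_zero, Nat.add_mod_right,
    Nat.add_div_right _ hj, Prod.mk.injEq, and_true]
  ring

lemma reduceExp_add_succ_zero_notMem (e : ℕ × ℕ) :
    reduceExp q j (e + (r + 1, 0)) ∉ standardExps q j r := by
  simp only [mem_standardExps, reduceExp, Prod.fst_add, Prod.snd_add]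
  omega

lemma reduceExp_add_sub_succ_one_notMem (hj : 0 < j) (e : ℕ × ℕ) :
    reduceExp q j (e + (r - q * j + 1, 1)) ∉ standardExps q j r := by
  simp only [mem_standardExps, reduceExp, Prod.fst_add, Prod.snd_add]
  have : (e.2 + 1) % j = 0 → q * j ≤ q * j * ((e.2 + 1) / j) := fun h =>
    Nat.le_mul_of_pos_right _
      (Nat.div_pos (Nat.le_of_dvd e.2.succ_pos (Nat.dvd_of_mod_eq_zero h)) hj)
  omega

theorem pow_mul_pow_eq_ite {A : Type*} [CommSemiring A] {c d : A} (hj : 0 < j)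
    (hc : c ^ (r + 1) = 0) (hd : d ^ j = c ^ (q * j)) (hcd : c ^ (r - q * j + 1) * d = 0)
    (e : ℕ × ℕ) :
    c ^ e.1 * d ^ e.2 = if reduceExp q j e ∈ standardExps q j r then
      c ^ (reduceExp q j e).1 * d ^ (reduceExp q j e).2 else 0 := by
  have hred : c ^ e.1 * d ^ e.2 = c ^ (reduceExp q j e).1 * d ^ (reduceExp q j e).2 := by
    conv_lhs => rw [← Nat.mod_add_div e.2 j]
    rw [reduceExp, pow_add, pow_mul, hd, ← pow_mul, pow_add]
    ring
  rw [hred]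
  split_ifs with hmem
  · rfl
  set e' := reduceExp q j e
  have hlt : e'.2 < j := Nat.mod_lt _ hj
  rw [mem_standardExps] at hmem
  rcases Nat.eq_zero_or_pos e'.2 with h0 | hpos
  · rw [h0, pow_zero, mul_one]
    exact pow_eq_zero_of_le (by omega) hc
  · obtain ⟨k, hk⟩ := Nat.exists_eq_add_of_lt (show r - q * j < e'.1 by omega)
    obtain ⟨l, hl⟩ := Nat.exists_eq_add_of_lt hpos
    calc c ^ e'.1 * d ^ e'.2 = c ^ (r - q * j + 1) * d * (c ^ k * d ^ l) := by
          rw [hk, hl]; ring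
      _ = 0 := by rw [hcd, zero_mul]

local notation "R₂" => MvPolynomial (Fin 2) (ZMod 2)

noncomputable section

def expEquiv : (Fin 2 →₀ ℕ) ≃ ℕ × ℕ := Finsupp.equivFunOnFinite.trans (finTwoArrowEquiv ℕ)

def mono (e : ℕ × ℕ) : R₂ := X 0 ^ e.1 * X 1 ^ e.2

lemma monomial_one_eq_mono (m : Fin 2 →₀ ℕ) : monomial m 1 = mono (expEquiv m) := by
  rw [monomial_eq, Finsupp.prod_fintype _ _ (by simp), Fin.prod_univ_two, C_1, one_mul]
  rfl

lemma mono_add (e e' : ℕ × ℕ) : mono (e + e') = mono e * mono e' := by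
  simp only [mono, Prod.fst_add, Prod.snd_add, pow_add]
  ring

lemma linearIndependent_mono : LinearIndependent (ZMod 2) mono := by
  have h : mono = basisMonomials (Fin 2) (ZMod 2) ∘ expEquiv.symm := funext fun e => by
    simp [coe_basisMonomials, monomial_one_eq_mono]
  rw [h]
  exact (basisMonomials _ _).linearIndependent.comp _ expEquiv.symm.injective

variable (q j r)

def normalForm (e : ℕ × ℕ) : R₂ :=
  if reduceExp q j e ∈ standardExps q j r then mono (reduceExp q j e) else 0

def normalFormMap : R₂ →ₗ[ZMod 2] R₂ :=
  (basisMonomials (Fin 2) (ZMod 2)).constr (ZMod 2) (normalForm q j r ∘ expEquiv)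

def mixedIdeal : Ideal R₂ :=
  Ideal.span {X 0 ^ (r + 1), X 0 ^ (q * j) + X 1 ^ j, X 0 ^ (r - q * j + 1) * X 1}

variable {q j r}

lemma normalFormMap_mono (e : ℕ × ℕ) : normalFormMap q j r (mono e) = normalForm q j r e := by
  simpa [normalFormMap, coe_basisMonomials, monomial_one_eq_mono] using
    (basisMonomials (Fin 2) (ZMod 2)).constr_basis (ZMod 2) (normalForm q j r ∘ expEquiv)
      (expEquiv.symm e)

lemma normalForm_of_mem (hj : 0 < j) {e : ℕ × ℕ} (he : e ∈ standardExps q j r) :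
    normalForm q j r e = mono e := by
  rw [normalForm, reduceExp_of_mem hj he, if_pos he]

lemma range_normalFormMap (hj : 0 < j) :
    LinearMap.range (normalFormMap q j r) =
      Submodule.span (ZMod 2) (Set.range fun e : standardExps q j r => mono e.1) := by
  rw [normalFormMap, Basis.constr_range, EquivLike.range_comp]
  apply le_antisymm
  · rw [Submodule.span_le]
    rintro _ ⟨e, rfl⟩
    rw [normalForm]
    split_ifs with he
    · exact Submodule.subset_span ⟨⟨_, he⟩, rfl⟩
    · exact zero_mem _
  · rw [Submodule.span_le]
    rintro _ ⟨⟨e, he⟩, rfl⟩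
    exact Submodule.subset_span ⟨e, normalForm_of_mem hj he⟩

lemma mk_mono_eq_mk_normalForm (hj : 0 < j) (e : ℕ × ℕ) :
    Ideal.Quotient.mk (mixedIdeal q j r) (mono e) =
      Ideal.Quotient.mk (mixedIdeal q j r) (normalForm q j r e) := by
  have hc : Ideal.Quotient.mk (mixedIdeal q j r) (X 0) ^ (r + 1) = 0 := by
    rw [← map_pow, Ideal.Quotient.eq_zero_iff_mem]
    exact Ideal.subset_span (by simp)
  have hd : Ideal.Quotient.mk (mixedIdeal q j r) (X 1) ^ j =
      Ideal.Quotient.mk (mixedIdeal q j r) (X 0) ^ (q * j) := by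
    rw [← map_pow, ← map_pow, Ideal.Quotient.mk_eq_mk_iff_sub_mem, CharTwo.sub_eq_add, add_comm]
    exact Ideal.subset_span (by simp)
  have hcd : Ideal.Quotient.mk (mixedIdeal q j r) (X 0) ^ (r - q * j + 1) *
      Ideal.Quotient.mk (mixedIdeal q j r) (X 1) = 0 := by
    rw [← map_pow, ← map_mul, Ideal.Quotient.eq_zero_iff_mem]
    exact Ideal.subset_span (by simp)
  rw [mono, map_mul, map_pow, map_pow, pow_mul_pow_eq_ite hj hc hd hcd, normalForm, apply_ite
    (Ideal.Quotient.mk _), map_zero, mono, map_mul, map_pow, map_pow]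

lemma sub_normalFormMap_mem (hj : 0 < j) (f : R₂) :
    f - normalFormMap q j r f ∈ mixedIdeal q j r := by
  have h : (Ideal.Quotient.mkₐ (ZMod 2) (mixedIdeal q j r)).toLinearMap ∘ₗ normalFormMap q j r =
      (Ideal.Quotient.mkₐ (ZMod 2) (mixedIdeal q j r)).toLinearMap :=
    (basisMonomials (Fin 2) (ZMod 2)).ext fun m => by
      simp only [LinearMap.comp_apply, AlgHom.toLinearMap_apply, Ideal.Quotient.mkₐ_eq_mk,
        coe_basisMonomials, monomial_one_eq_mono, normalFormMap_mono, mk_mono_eq_mk_normalForm hj]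
  rw [← Ideal.Quotient.mk_eq_mk_iff_sub_mem]
  exact (LinearMap.congr_fun h f).symm

lemma normalFormMap_mul_eq_zero {g : R₂} (hg : ∀ e, normalFormMap q j r (mono e * g) = 0)
    (p : R₂) : normalFormMap q j r (p * g) = 0 := by
  have h : normalFormMap q j r ∘ₗ LinearMap.mulRight (ZMod 2) g = 0 :=
    (basisMonomials (Fin 2) (ZMod 2)).ext fun m => by
      simpa [coe_basisMonomials, monomial_one_eq_mono] using hg (expEquiv m)
  exact LinearMap.congr_fun h p

lemma mixedIdeal_le_ker (hj : 0 < j) {f : R₂} (hf : f ∈ mixedIdeal q j r) :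
    normalFormMap q j r f = 0 := by
  suffices ∀ p, normalFormMap q j r (p * f) = 0 by simpa using this 1
  induction hf using Submodule.span_induction with
  | mem g hg =>
    apply normalFormMap_mul_eq_zero
    intro e
    simp only [Set.mem_insert_iff, Set.mem_singleton_iff] at hg
    rcases hg with rfl | rfl | rfl
    · rw [show (X 0 ^ (r + 1) : R₂) = mono (r + 1, 0) by simp [mono], ← mono_add,
        normalFormMap_mono, normalForm, if_neg (reduceExp_add_succ_zero_notMem e)]
    -- both products have the same normal form, and `1 + 1 = 0`
    · rw [show (X 0 ^ (q * j) + X 1 ^ j : R₂) = mono (q * j, 0) + mono (0, j) by simp [mono],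
        mul_add, ← mono_add, ← mono_add, map_add, normalFormMap_mono, normalFormMap_mono,
        normalForm, normalForm, reduceExp_add_mul_zero hj, CharTwo.add_self_eq_zero]
    · rw [show (X 0 ^ (r - q * j + 1) * X 1 : R₂) = mono (r - q * j + 1, 1) by simp [mono],
        ← mono_add, normalFormMap_mono, normalForm,
        if_neg (reduceExp_add_sub_succ_one_notMem hj e)]
  | zero => simp
  | add x y _ _ hx hy => intro p; rw [mul_add, map_add, hx, hy, add_zero]
  | smul a x _ hx => intro p; rw [smul_eq_mul, ← mul_assoc, hx]

lemma ker_normalFormMap (hj : 0 < j) :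
    LinearMap.ker (normalFormMap q j r) = (mixedIdeal q j r).restrictScalars (ZMod 2) := by
  ext f
  refine ⟨fun hf => ?_, mixedIdeal_le_ker hj⟩
  simpa [LinearMap.mem_ker.mp hf] using sub_normalFormMap_mem (q := q) (r := r) hj f

end

end MixedRing

open MixedRing in
theorem finrank_quotient_mixed_ring_general (q j r : ℕ) (hj : 1 ≤ j) (hr : q * j < r) :
    Module.finrank (ZMod 2)
      (MvPolynomial (Fin 2) (ZMod 2) ⧸
        Ideal.span {(X 0 : MvPolynomial (Fin 2) (ZMod 2)) ^ (r + 1),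
          (X 0) ^ (q * j) + (X 1) ^ j, (X 0) ^ (r - q * j + 1) * X 1}) =
      j * (r - q * j) + q * j + j := by
  change finrank (ZMod 2) (_ ⧸ mixedIdeal q j r) = _
  rw [Ideal.finrank_quotient_eq_finrank_range _ _ (ker_normalFormMap hj), range_normalFormMap hj,
    finrank_span_eq_card (b := fun e : standardExps q j r => mono e.1)
      (linearIndependent_mono.comp _ Subtype.val_injective), Fintype.card_coe,
    card_standardExps hj hr.le]

/-- For integers `q ≥ 1`, `j ≥ 1` and `r > q·j`, the ring
`ℤ₂[c, d]/(c^{r+1}, c^{qj} + d^j, c^{r−qj+1}·d)` has dimension `j·(r − q·j) + q·j + j`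
as a `ℤ₂`-vector space. -/
theorem finrank_quotient_mixed_ring (q j r : ℕ) (hq : 1 ≤ q) (hj : 1 ≤ j) (hr : q * j < r) :
    Module.finrank (ZMod 2)
      (MvPolynomial (Fin 2) (ZMod 2) ⧸
        Ideal.span {(X 0 : MvPolynomial (Fin 2) (ZMod 2)) ^ (r + 1),
          (X 0) ^ (q * j) + (X 1) ^ j, (X 0) ^ (r - q * j + 1) * X 1}) =
      j * (r - q * j) + q * j + j :=
  finrank_quotient_mixed_ring_general q j r hj hr
end
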